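/- Suppose u, v, z solve the N = 3 Riemann type system, 2 u_x z_x - v_x² is nowhere zero, and set r := (2 u_x³ - 6 u_x v_x + 9 z_x)/(2 u_x z_x - v_x²). Then D_t r + u_x r = 6. -/

import Mathlib

open Real

noncomputable def pdx (f : ℝ → ℝ → ℝ) (x t : ℝ) : ℝ := deriv (fun y => f y t) x

noncomputable def pdt (f : ℝ → ℝ → ℝ) (x t : ℝ) : ℝ := deriv (fun s => f x s) t

/-- The material derivative `D_t = ∂/∂t + u ∂/∂x` associated to the velocity `u`. -/
noncomputable def matDt (u f : ℝ → ℝ → ℝ) : ℝ → ℝ → ℝ :=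
  fun x t => pdt f x t + u x t * pdx f x t
section Aux
open Function

lemma hasDerivAt_x {f : ℝ → ℝ → ℝ} (hf : ContDiff ℝ (⊤ : ℕ∞) (uncurry f)) (x t : ℝ) :
    HasDerivAt (fun y => f y t) (fderiv ℝ (uncurry f) (x, t) (1, 0)) x := by
  have h1 : HasDerivAt (fun y : ℝ => (y, t)) ((1 : ℝ), (0 : ℝ)) x :=
    (hasDerivAt_id x).prodMk (hasDerivAt_const x t)
  exact ((hf.differentiable (by simp) (x, t)).hasFDerivAt).comp_hasDerivAt x h1

lemma hasDerivAt_t {f : ℝ → ℝ → ℝ} (hf : ContDiff ℝ (⊤ : ℕ∞) (uncurry f)) (x t : ℝ) :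
    HasDerivAt (fun s => f x s) (fderiv ℝ (uncurry f) (x, t) (0, 1)) t := by
  have h1 : HasDerivAt (fun s : ℝ => (x, s)) ((0 : ℝ), (1 : ℝ)) t :=
    (hasDerivAt_const t x).prodMk (hasDerivAt_id t)
  exact ((hf.differentiable (by simp) (x, t)).hasFDerivAt).comp_hasDerivAt t h1

lemma hasDerivAt_pdx {f : ℝ → ℝ → ℝ} (hf : ContDiff ℝ (⊤ : ℕ∞) (uncurry f)) (x t : ℝ) :
    HasDerivAt (fun y => f y t) (pdx f x t) x :=
  (hasDerivAt_x hf x t).differentiableAt.hasDerivAt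

lemma hasDerivAt_pdt {f : ℝ → ℝ → ℝ} (hf : ContDiff ℝ (⊤ : ℕ∞) (uncurry f)) (x t : ℝ) :
    HasDerivAt (fun s => f x s) (pdt f x t) t :=
  (hasDerivAt_t hf x t).differentiableAt.hasDerivAt

lemma uncurry_pdx {f : ℝ → ℝ → ℝ} (hf : ContDiff ℝ (⊤ : ℕ∞) (uncurry f)) :
    uncurry (pdx f) = fun p : ℝ × ℝ => fderiv ℝ (uncurry f) p (1, 0) := by
  funext p
  exact (hasDerivAt_x hf p.1 p.2).deriv

lemma smooth_pdx {f : ℝ → ℝ → ℝ} (hf : ContDiff ℝ (⊤ : ℕ∞) (uncurry f)) :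
    ContDiff ℝ (⊤ : ℕ∞) (uncurry (pdx f)) := by
  rw [uncurry_pdx hf]
  exact (hf.fderiv_right (by simp)).clm_apply contDiff_const

lemma clairaut {f : ℝ → ℝ → ℝ} (hf : ContDiff ℝ (⊤ : ℕ∞) (uncurry f)) (x t : ℝ) :
    pdt (pdx f) x t = pdx (pdt f) x t := by
  have hd : Differentiable ℝ (fderiv ℝ (uncurry f)) :=
    (hf.fderiv_right (m := (⊤ : ℕ∞)) (by simp)).differentiable (by simp)
  have key2 : ∀ w v : ℝ × ℝ,
      fderiv ℝ (fun p => fderiv ℝ (uncurry f) p w) (x, t) v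
        = fderiv ℝ (fderiv ℝ (uncurry f)) (x, t) v w := by
    intro w v
    have h := ((ContinuousLinearMap.apply ℝ ℝ w).hasFDerivAt).comp (x, t)
      (hd (x, t)).hasFDerivAt
    have h' : HasFDerivAt (fun p => fderiv ℝ (uncurry f) p w)
        (((ContinuousLinearMap.apply ℝ ℝ) w).comp (fderiv ℝ (fderiv ℝ (uncurry f)) (x, t)))
        (x, t) := h
    rw [h'.fderiv]
    rfl
  have hsymm := (hf.contDiffAt (x := (x, t))).isSymmSndFDerivAt (by rw [minSmoothness_of_isRCLikeNormedField]; exact WithTop.coe_le_coe.mpr (le_top : (2 : ℕ∞) ≤ ⊤))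
  have e1 : pdt (pdx f) x t = fderiv ℝ (fderiv ℝ (uncurry f)) (x, t) (0, 1) (1, 0) := by
    have h := (hasDerivAt_t (smooth_pdx hf) x t).deriv
    rw [uncurry_pdx hf] at h
    rw [pdt] at *
    rw [h, key2]
  have e2 : pdx (pdt f) x t = fderiv ℝ (fderiv ℝ (uncurry f)) (x, t) (1, 0) (0, 1) := by
    have huf : uncurry (pdt f) = fun p : ℝ × ℝ => fderiv ℝ (uncurry f) p (0, 1) := by
      funext p
      exact (hasDerivAt_t hf p.1 p.2).deriv
    have h := (hasDerivAt_x (f := pdt f) ?_ x t).deriv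
    · rw [huf] at h
      rw [pdx] at *
      rw [h, key2]
    · rw [huf]
      exact (hf.fderiv_right (by simp)).clm_apply contDiff_const
  rw [e1, e2, hsymm]

lemma key {u f g : ℝ → ℝ → ℝ} (hu : ContDiff ℝ (⊤ : ℕ∞) (uncurry u))
    (hf : ContDiff ℝ (⊤ : ℕ∞) (uncurry f)) (hg : ContDiff ℝ (⊤ : ℕ∞) (uncurry g))
    (heq : ∀ x t, pdt f x t = g x t - u x t * pdx f x t) (x t : ℝ) :
    pdt (pdx f) x t + u x t * pdx (pdx f) x t
      = pdx g x t - pdx u x t * pdx f x t := by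
  have hC := clairaut hf x t
  have hfun : (fun y => pdt f y t) = fun y => g y t - u y t * pdx f y t :=
    funext fun y => heq y t
  have H : HasDerivAt (fun y => g y t - u y t * pdx f y t)
      (pdx g x t - (pdx u x t * pdx f x t + u x t * pdx (pdx f) x t)) x :=
    (hasDerivAt_pdx hg x t).sub
      ((hasDerivAt_pdx hu x t).mul (hasDerivAt_pdx (smooth_pdx hf) x t))
  have h2 : pdx (pdt f) x t
      = pdx g x t - (pdx u x t * pdx f x t + u x t * pdx (pdx f) x t) := by
    show deriv (fun y => pdt f y t) x = _
    rw [hfun]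
    exact H.deriv
  rw [hC, h2]
  ring


end Aux

theorem statement16
    (u v z : ℝ → ℝ → ℝ)
    (hu : ContDiff ℝ (⊤ : ℕ∞) (Function.uncurry u))
    (hv : ContDiff ℝ (⊤ : ℕ∞) (Function.uncurry v))
    (hz : ContDiff ℝ (⊤ : ℕ∞) (Function.uncurry z))
    (heq1 : ∀ x t, pdt u x t = v x t - u x t * pdx u x t)
    (heq2 : ∀ x t, pdt v x t = z x t - u x t * pdx v x t)
    (heq3 : ∀ x t, pdt z x t = - u x t * pdx z x t)
    (hne : ∀ x t, 2 * pdx u x t * pdx z x t - (pdx v x t) ^ 2 ≠ 0)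
    (r : ℝ → ℝ → ℝ)
    (hr : ∀ x t, r x t =
      (2 * (pdx u x t) ^ 3 - 6 * pdx u x t * pdx v x t + 9 * pdx z x t)
        / (2 * pdx u x t * pdx z x t - (pdx v x t) ^ 2)) :
    ∀ x t, matDt u r x t + pdx u x t * r x t = 6 := by
  intro x t
  have hsA := smooth_pdx hu
  have hsB := smooth_pdx hv
  have hsC := smooth_pdx hz
  have hAt := hasDerivAt_pdt hsA x t
  have hBt := hasDerivAt_pdt hsB x t
  have hCt := hasDerivAt_pdt hsC x t
  have hAx := hasDerivAt_pdx hsA x t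
  have hBx := hasDerivAt_pdx hsB x t
  have hCx := hasDerivAt_pdx hsC x t
  have hMne := hne x t
  -- t-derivative of r
  have hNt : HasDerivAt
      (fun s => 2 * (pdx u x s) ^ 3 - 6 * pdx u x s * pdx v x s + 9 * pdx z x s)
      (6 * (pdx u x t) ^ 2 * pdt (pdx u) x t - 6 * pdt (pdx u) x t * pdx v x t
        - 6 * pdx u x t * pdt (pdx v) x t + 9 * pdt (pdx z) x t) t := by
    have h := (((hAt.pow 3).const_mul 2).sub ((hAt.const_mul 6).mul hBt)).add
      (hCt.const_mul 9)
    refine h.congr_deriv ?_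
    ring
  have hMt : HasDerivAt
      (fun s => 2 * pdx u x s * pdx z x s - (pdx v x s) ^ 2)
      (2 * pdt (pdx u) x t * pdx z x t + 2 * pdx u x t * pdt (pdx z) x t
        - 2 * pdx v x t * pdt (pdx v) x t) t := by
    have h := ((hAt.const_mul 2).mul hCt).sub (hBt.pow 2)
    refine h.congr_deriv ?_
    ring
  have hrt : pdt r x t =
      ((6 * (pdx u x t) ^ 2 * pdt (pdx u) x t - 6 * pdt (pdx u) x t * pdx v x t
          - 6 * pdx u x t * pdt (pdx v) x t + 9 * pdt (pdx z) x t)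
        * (2 * pdx u x t * pdx z x t - (pdx v x t) ^ 2)
      - (2 * (pdx u x t) ^ 3 - 6 * pdx u x t * pdx v x t + 9 * pdx z x t)
        * (2 * pdt (pdx u) x t * pdx z x t + 2 * pdx u x t * pdt (pdx z) x t
          - 2 * pdx v x t * pdt (pdx v) x t))
      / (2 * pdx u x t * pdx z x t - (pdx v x t) ^ 2) ^ 2 := by
    have hfun : (fun s => r x s)
        = fun s => (2 * (pdx u x s) ^ 3 - 6 * pdx u x s * pdx v x s + 9 * pdx z x s)
          / (2 * pdx u x s * pdx z x s - (pdx v x s) ^ 2) := funext fun s => hr x s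
    show deriv (fun s => r x s) t = _
    rw [hfun]
    exact (hNt.div hMt hMne).deriv
  -- x-derivative of r
  have hNx : HasDerivAt
      (fun y => 2 * (pdx u y t) ^ 3 - 6 * pdx u y t * pdx v y t + 9 * pdx z y t)
      (6 * (pdx u x t) ^ 2 * pdx (pdx u) x t - 6 * pdx (pdx u) x t * pdx v x t
        - 6 * pdx u x t * pdx (pdx v) x t + 9 * pdx (pdx z) x t) x := by
    have h := (((hAx.pow 3).const_mul 2).sub ((hAx.const_mul 6).mul hBx)).add
      (hCx.const_mul 9)
    refine h.congr_deriv ?_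
    ring
  have hMx : HasDerivAt
      (fun y => 2 * pdx u y t * pdx z y t - (pdx v y t) ^ 2)
      (2 * pdx (pdx u) x t * pdx z x t + 2 * pdx u x t * pdx (pdx z) x t
        - 2 * pdx v x t * pdx (pdx v) x t) x := by
    have h := ((hAx.const_mul 2).mul hCx).sub (hBx.pow 2)
    refine h.congr_deriv ?_
    ring
  have hrx : pdx r x t =
      ((6 * (pdx u x t) ^ 2 * pdx (pdx u) x t - 6 * pdx (pdx u) x t * pdx v x t
          - 6 * pdx u x t * pdx (pdx v) x t + 9 * pdx (pdx z) x t)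
        * (2 * pdx u x t * pdx z x t - (pdx v x t) ^ 2)
      - (2 * (pdx u x t) ^ 3 - 6 * pdx u x t * pdx v x t + 9 * pdx z x t)
        * (2 * pdx (pdx u) x t * pdx z x t + 2 * pdx u x t * pdx (pdx z) x t
          - 2 * pdx v x t * pdx (pdx v) x t))
      / (2 * pdx u x t * pdx z x t - (pdx v x t) ^ 2) ^ 2 := by
    have hfun : (fun y => r y t)
        = fun y => (2 * (pdx u y t) ^ 3 - 6 * pdx u y t * pdx v y t + 9 * pdx z y t)
          / (2 * pdx u y t * pdx z y t - (pdx v y t) ^ 2) := funext fun y => hr y t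
    show deriv (fun y => r y t) x = _
    rw [hfun]
    exact (hNx.div hMx hMne).deriv
  -- material derivative relations
  have R1 := key hu hu hv heq1 x t
  have R2 := key hu hv hz heq2 x t
  have heq3' : ∀ x t, pdt z x t = (fun _ _ => (0 : ℝ)) x t - u x t * pdx z x t := by
    intro x t
    simp only
    rw [heq3 x t]
    ring
  have R3 := key hu hz contDiff_const heq3' x t
  have hz0 : pdx (fun _ _ => (0 : ℝ)) x t = 0 := by simp [pdx]
  rw [hz0] at R3
  have hAt' : pdt (pdx u) x t
      = pdx v x t - pdx u x t * pdx u x t - u x t * pdx (pdx u) x t := by linarith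
  have hBt' : pdt (pdx v) x t
      = pdx z x t - pdx u x t * pdx v x t - u x t * pdx (pdx v) x t := by linarith
  have hCt' : pdt (pdx z) x t
      = 0 - pdx u x t * pdx z x t - u x t * pdx (pdx z) x t := by linarith
  simp only [matDt]
  rw [hrt, hrx, hr x t, hAt', hBt', hCt']
  field_simp
  rw [div_eq_iff (pow_ne_zero 2 (by intro h; apply hMne; linarith))]
  ring
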